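/- arXiv:1712.00864 — 2 statements merged into one kernel-verified Lean document; each statement's English description precedes it below -/
import Mathlib

section
/- Let h: ℕ→ℕ be a computable nondecreasing function and let g(n) = h(2n). Then IOE(h) ≡_W IOE(g) (Muchnik equivalence) and AED(h) ≡_S AED(g) (Medvedev equivalence). -/
open Filter

namespace Paper

/-! ### Oracle computability -/

/-- Codes for oracle Turing functionals (partial recursive operators with one
function oracle), following the pattern of `Nat.Partrec.Code`. -/
inductive OracleCode : Type
  | zero
  | succ
  | left
  | right
  | oracle
  | pair : OracleCode → OracleCode → OracleCode
  | comp : OracleCode → OracleCode → OracleCode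
  | prec : OracleCode → OracleCode → OracleCode
  | rfind' : OracleCode → OracleCode

/-- Evaluation of an oracle code with oracle `g : ℕ → ℕ`. -/
def OracleCode.eval (g : ℕ → ℕ) : OracleCode → ℕ →. ℕ
  | .zero => pure 0
  | .succ => Nat.succ
  | .left => ↑fun n : ℕ => n.unpair.1
  | .right => ↑fun n : ℕ => n.unpair.2
  | .oracle => ↑fun n : ℕ => g n
  | .pair cf cg => fun n => Nat.pair <$> eval g cf n <*> eval g cg n
  | .comp cf cg => fun n => eval g cg n >>= eval g cf
  | .prec cf cg =>
    Nat.unpaired fun a n =>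
      n.rec (eval g cf a) fun y IH => do
        let i ← IH
        eval g cg (Nat.pair a (Nat.pair y i))
  | .rfind' cf =>
    Nat.unpaired fun a m =>
      (Nat.rfind fun n => (fun m => m = 0) <$> eval g cf (Nat.pair a (n + m))).map (· + m)

/-- Turing reducibility: `f ≤_T g` iff some oracle functional with oracle `g`
computes `f` (totally). -/
def TuringLE (f g : ℕ → ℕ) : Prop :=
  ∃ c : OracleCode, ∀ n, OracleCode.eval g c n = Part.some (f n)

/-- Turing equivalence. -/
def TuringEquiv (f g : ℕ → ℕ) : Prop := TuringLE f g ∧ TuringLE g f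

/-- A mass problem is a set of functions `ℕ → ℕ`. -/
abbrev MassProblem := Set (ℕ → ℕ)

/-- Muchnik (weak) reducibility `B ≤_W C`. -/
def MuchnikLE (B C : MassProblem) : Prop := ∀ g ∈ C, ∃ f ∈ B, TuringLE f g

/-- Muchnik equivalence. -/
def MuchnikEquiv (B C : MassProblem) : Prop := MuchnikLE B C ∧ MuchnikLE C B

/-- Medvedev (strong) reducibility `B ≤_S C`: a single Turing functional is
defined on all of `C` and maps each member of `C` to a member of `B`. -/
def MedvedevLE (B C : MassProblem) : Prop :=
  ∃ c : OracleCode, ∀ g ∈ C, ∃ f ∈ B, ∀ n, OracleCode.eval g c n = Part.some (f n)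

/-- Medvedev equivalence. -/
def MedvedevEquiv (B C : MassProblem) : Prop := MedvedevLE B C ∧ MedvedevLE C B

/-! ### Density notions -/

/-- Lower (asymptotic) density of a set of naturals. -/
noncomputable def lowerDensity (z : Set ℕ) : ℝ :=
  Filter.liminf (fun n => (Nat.card ↥(z ∩ Set.Iio n) : ℝ) / n) Filter.atTop

/-- `x ↔ y`: the agreement set of two functions. -/
def agree (x y : ℕ → ℕ) : Set ℕ := {n | x n = y n}

/-- A bit sequence is a `{0,1}`-valued function. -/
def IsBitSeq (x : ℕ → ℕ) : Prop := ∀ n, x n < 2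

/-- The mass problem `D(p)`. -/
def probD (p : ℝ) : MassProblem :=
  {y | IsBitSeq y ∧ ∀ x : ℕ → ℕ, IsBitSeq x → Computable x →
    lowerDensity (agree x y) ≤ p}

/-- The mass problem `B(p)`. -/
def probB (p : ℝ) : MassProblem :=
  {y | IsBitSeq y ∧ ∀ x : ℕ → ℕ, IsBitSeq x → Computable x →
    p < lowerDensity (agree x y)}

/-- The mass problem `IOE(h)`. -/
def IOE (h : ℕ → ℕ) : MassProblem :=
  {f | ∀ x : ℕ → ℕ, Computable x → (∀ n, x n < h n) → ∃ᶠ n in atTop, f n = x n}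

/-- The mass problem `AED(h)`. -/
def AED (h : ℕ → ℕ) : MassProblem :=
  {f | (∀ n, f n < h n) ∧ ∀ x : ℕ → ℕ, Computable x → ∀ᶠ n in atTop, f n ≠ x n}

/-! ### Hamming distance and the problems `D⟨≠*,ĥ,q⟩`, `B⟨≠*,ĥ,q⟩` -/

/-- Normalized Hamming distance between `a` and `b`, viewed as binary strings
of length `r` (via binary expansion with leading zeros). -/
noncomputable def nhd (r a b : ℕ) : ℝ :=
  (((Finset.range r).filter fun i => a.testBit i ≠ b.testBit i).card : ℝ) / r

/-- The mass problem `D⟨≠*, ĥ, q⟩`. -/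
def probDneq (hh : ℕ → ℕ) (q : ℝ) : MassProblem :=
  {y | (∀ n, y n < 2 ^ hh n) ∧ ∀ x : ℕ → ℕ, Computable x → (∀ n, x n < 2 ^ hh n) →
    ∃ᶠ n in atTop, nhd (hh n) (x n) (y n) < q}

/-- The mass problem `B⟨≠*, ĥ, q⟩`. -/
def probBneq (hh : ℕ → ℕ) (q : ℝ) : MassProblem :=
  {y | (∀ n, y n < 2 ^ hh n) ∧ ∀ x : ℕ → ℕ, Computable x → (∀ n, x n < 2 ^ hh n) →
    ∀ᶠ n in atTop, q ≤ nhd (hh n) (x n) (y n)}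

/-! ### Slaloms, coded as functions `ℕ → ℕ` via binary digits -/

/-- `s : ℕ → ℕ`, coding finite sets via binary digits (`i ∈ s(n)` iff the
`i`-th bit of `s n` is set), is an `L`-slalom bounded by `u`. -/
def IsSlalomCode (u : ℕ → ℕ) (L : ℕ) (s : ℕ → ℕ) : Prop :=
  ∀ n, (∀ i, (s n).testBit i = true → i < u n) ∧
    ((Finset.range (u n)).filter fun i => (s n).testBit i = true).card ≤ L

/-- The mass problem `D⟨∌*, u, L⟩`. -/
def probDSlalom (u : ℕ → ℕ) (L : ℕ) : MassProblem :=
  {s | IsSlalomCode u L s ∧ ∀ y : ℕ → ℕ, Computable y → (∀ n, y n < u n) →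
    ∃ᶠ n in atTop, (s n).testBit (y n) = true}

/-- The mass problem `B⟨∌*, u, L⟩`. -/
def probBSlalom (u : ℕ → ℕ) (L : ℕ) : MassProblem :=
  {y | (∀ n, y n < u n) ∧ ∀ s : ℕ → ℕ, Computable s → IsSlalomCode u L s →
    ∀ᶠ n in atTop, (s n).testBit (y n) = false}

/-! ### Gamma and Delta values -/

/-- `γ(A)`. -/
noncomputable def gammaVal (A : ℕ → ℕ) : ℝ :=
  sSup ((fun x => lowerDensity (agree A x)) '' {x | IsBitSeq x ∧ Computable x})

/-- `Γ(A)`. -/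
noncomputable def GammaVal (A : ℕ → ℕ) : ℝ :=
  sInf (gammaVal '' {Y | IsBitSeq Y ∧ TuringEquiv Y A})

/-- `δ(A)`. -/
noncomputable def deltaVal (A : ℕ → ℕ) : ℝ :=
  sInf ((fun x => lowerDensity (agree A x)) '' {x | IsBitSeq x ∧ Computable x})

/-- `Δ(A)`. -/
noncomputable def DeltaVal (A : ℕ → ℕ) : ℝ :=
  sSup (deltaVal '' {Y | IsBitSeq Y ∧ TuringLE Y A})

/-! ### Cardinal characteristics -/

/-- The cardinal characteristic `𝔡(p)`. -/
noncomputable def dChar (p : ℝ) : Cardinal :=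
  sInf {c : Cardinal | ∃ G : Set (ℕ → ℕ), c = Cardinal.mk G ∧ (∀ y ∈ G, IsBitSeq y) ∧
    ∀ x : ℕ → ℕ, IsBitSeq x → ∃ y ∈ G, p < lowerDensity (agree x y)}

/-- The cardinal characteristic `𝔟(p)`. -/
noncomputable def bChar (p : ℝ) : Cardinal :=
  sInf {c : Cardinal | ∃ F : Set (ℕ → ℕ), c = Cardinal.mk F ∧ (∀ x ∈ F, IsBitSeq x) ∧
    ∀ y : ℕ → ℕ, IsBitSeq y → ∃ x ∈ F, lowerDensity (agree x y) ≤ p}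

/-- The cardinal characteristic `𝔡(≠*, h)`. -/
noncomputable def dNeq (h : ℕ → ℕ) : Cardinal :=
  sInf {c : Cardinal | ∃ G : Set (ℕ → ℕ), c = Cardinal.mk G ∧ (∀ y ∈ G, ∀ n, y n < h n) ∧
    ∀ x : ℕ → ℕ, ∃ y ∈ G, ∀ᶠ n in atTop, x n ≠ y n}

/-- The cardinal characteristic `𝔟(≠*, h)`. -/
noncomputable def bNeq (h : ℕ → ℕ) : Cardinal :=
  sInf {c : Cardinal | ∃ F : Set (ℕ → ℕ), c = Cardinal.mk F ∧
    ∀ y : ℕ → ℕ, (∀ n, y n < h n) → ∃ x ∈ F, ∃ᶠ n in atTop, x n = y n}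

/-- The cardinal characteristic `𝔡⟨≠*, ĥ, q⟩`. -/
noncomputable def dHam (hh : ℕ → ℕ) (q : ℝ) : Cardinal :=
  sInf {c : Cardinal | ∃ G : Set (ℕ → ℕ), c = Cardinal.mk G ∧
    (∀ y ∈ G, ∀ n, y n < 2 ^ hh n) ∧
    ∀ x : ℕ → ℕ, (∀ n, x n < 2 ^ hh n) →
      ∃ y ∈ G, ∀ᶠ n in atTop, q ≤ nhd (hh n) (x n) (y n)}

/-- The cardinal characteristic `𝔟⟨≠*, ĥ, q⟩`. -/
noncomputable def bHam (hh : ℕ → ℕ) (q : ℝ) : Cardinal :=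
  sInf {c : Cardinal | ∃ F : Set (ℕ → ℕ), c = Cardinal.mk F ∧
    (∀ x ∈ F, ∀ n, x n < 2 ^ hh n) ∧
    ∀ y : ℕ → ℕ, (∀ n, y n < 2 ^ hh n) →
      ∃ x ∈ F, ∃ᶠ n in atTop, nhd (hh n) (x n) (y n) < q}

/-- `s : ℕ → Finset ℕ` is an `L`-slalom bounded by `u`. -/
def IsSlalom (u : ℕ → ℕ) (L : ℕ) (s : ℕ → Finset ℕ) : Prop :=
  ∀ n, (∀ i ∈ s n, i < u n) ∧ (s n).card ≤ L

/-- The cardinal characteristic `𝔡⟨∌*, u, L⟩`. -/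
noncomputable def dSlalom (u : ℕ → ℕ) (L : ℕ) : Cardinal :=
  sInf {c : Cardinal | ∃ G : Set (ℕ → ℕ), c = Cardinal.mk G ∧ (∀ y ∈ G, ∀ n, y n < u n) ∧
    ∀ s : ℕ → Finset ℕ, IsSlalom u L s → ∃ y ∈ G, ∀ᶠ n in atTop, y n ∉ s n}

/-- The cardinal characteristic `𝔟⟨∌*, u, L⟩`. -/
noncomputable def bSlalom (u : ℕ → ℕ) (L : ℕ) : Cardinal :=
  sInf {c : Cardinal | ∃ F : Set (ℕ → Finset ℕ), c = Cardinal.mk F ∧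
    (∀ s ∈ F, IsSlalom u L s) ∧
    ∀ y : ℕ → ℕ, (∀ n, y n < u n) → ∃ s ∈ F, ∃ᶠ n in atTop, y n ∈ s n}

/-! ### Order functions and list decoding -/

/-- An order function: nondecreasing, unbounded and computable. -/
def IsOrderFunc (F : ℕ → ℕ) : Prop :=
  Computable F ∧ Monotone F ∧ ∀ b : ℕ, ∃ n, b < F n

/-- The list-decoding property for parameters `q`, `ε`, `L`: for every length `r`
there is a set `C` of `2^⌊εr⌋` binary strings of length `r` (coded as numbers
below `2^r`) such that every string has at most `L` elements of `C` within
normalized Hamming distance `< q`. -/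
def ListDecoding (q ε : ℝ) (L : ℕ) : Prop :=
  ∀ r : ℕ, ∃ C : Finset ℕ, (∀ a ∈ C, a < 2 ^ r) ∧ C.card = 2 ^ ⌊ε * r⌋₊ ∧
    ∀ σ < 2 ^ r, (C.filter fun τ => nhd r σ τ < q).card ≤ L

/-! The hard reduction is `IOE(h(2·)) ≤_W IOE(h)`. Given `f ∈ IOE(h)`, one of its even part
`n ↦ f(2n)` and odd part `n ↦ f(2n+1)` already lies in `IOE(h(2·))`: otherwise computable
`x₀, x₁` bounded by `h(2·) ≤ h(2·+1)` witness the failures, and their interleaving is a computable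
function below `h` that `f` eventually avoids. For `AED(h) ≤_S AED(h(2·))` the functional
`f ↦ (m ↦ f(⌊m/2⌋))` works, since a computable `x` is eventually avoided by `f` along both halves
`x(2·)` and `x(2·+1)`. The remaining two reductions are inclusions, by monotonicity of `h`. -/

namespace OracleCode

def ofCode : Nat.Partrec.Code → OracleCode
  | .zero => .zero
  | .succ => .succ
  | .left => .left
  | .right => .right
  | .pair a b => .pair (ofCode a) (ofCode b)
  | .comp a b => .comp (ofCode a) (ofCode b)
  | .prec a b => .prec (ofCode a) (ofCode b)
  | .rfind' a => .rfind' (ofCode a)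

theorem eval_ofCode (g : ℕ → ℕ) : ∀ c, eval g (ofCode c) = c.eval
  | .zero | .succ | .left | .right => rfl
  | .pair a b | .comp a b | .prec a b => by
      simp only [ofCode, eval, Nat.Partrec.Code.eval, eval_ofCode g a, eval_ofCode g b]
      rfl
  | .rfind' a => by
      simp only [ofCode, eval, Nat.Partrec.Code.eval, eval_ofCode g a]
      rfl

theorem exists_eval_eq_comp {p : ℕ → ℕ} (hp : Computable p) :
    ∃ c : OracleCode, ∀ (g : ℕ → ℕ) (n : ℕ), eval g c n = Part.some (g (p n)) := by
  obtain ⟨c, hc⟩ := Nat.Partrec.Code.exists_code.mp (Partrec.nat_iff.mp hp)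
  refine ⟨.comp .oracle (ofCode c), fun g n => ?_⟩
  simp only [eval, eval_ofCode, hc]
  exact Part.bind_some _ _

end OracleCode

theorem turingLE_comp {p : ℕ → ℕ} (hp : Computable p) (g : ℕ → ℕ) :
    TuringLE (fun n => g (p n)) g :=
  let ⟨c, hc⟩ := OracleCode.exists_eval_eq_comp hp
  ⟨c, hc g⟩

theorem medvedevLE_of_comp {B C : MassProblem} {p : ℕ → ℕ} (hp : Computable p)
    (hBC : ∀ g ∈ C, (fun n => g (p n)) ∈ B) : MedvedevLE B C :=
  let ⟨c, hc⟩ := OracleCode.exists_eval_eq_comp hp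
  ⟨c, fun g hg => ⟨_, hBC g hg, hc g⟩⟩

theorem medvedevLE_of_subset {B C : MassProblem} (hCB : C ⊆ B) : MedvedevLE B C :=
  medvedevLE_of_comp Computable.id hCB

theorem MedvedevLE.muchnikLE {B C : MassProblem} (hBC : MedvedevLE B C) : MuchnikLE B C :=
  fun g hg =>
    let ⟨c, hc⟩ := hBC
    let ⟨f, hfB, hf⟩ := hc g hg
    ⟨f, hfB, c, hf⟩

section Interleave

def interleave (a b : ℕ → ℕ) (m : ℕ) : ℕ := if m % 2 = 0 then a (m / 2) else b (m / 2)

variable {a b : ℕ → ℕ}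

@[simp]
theorem interleave_two_mul (n : ℕ) : interleave a b (2 * n) = a n := by
  simp [interleave]

@[simp]
theorem interleave_two_mul_add_one (n : ℕ) : interleave a b (2 * n + 1) = b n := by
  simp [interleave, Nat.mul_add_div]

theorem interleave_self : interleave a a = fun m => a (m / 2) := by
  funext m
  simp [interleave]

theorem computable_interleave (ha : Computable a) (hb : Computable b) :
    Computable (interleave a b) := by
  have hdiv : Computable fun m : ℕ => m / 2 :=
    (Primrec.nat_div.comp .id (.const 2)).to_comp
  have heven : ComputablePred fun m : ℕ => m % 2 = 0 :=
    (Primrec.eq.comp (Primrec.nat_mod.comp .id (.const 2)) (.const 0)).computablePred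
  exact heven.ite (ha.comp hdiv) (hb.comp hdiv)

theorem forall_interleave_lt {u : ℕ → ℕ} (ha : ∀ n, a n < u (2 * n))
    (hb : ∀ n, b n < u (2 * n + 1)) (m : ℕ) : interleave a b m < u m := by
  obtain ⟨n, rfl | rfl⟩ := Nat.even_or_odd' m
  · simpa using ha n
  · simpa using hb n

end Interleave

theorem eventually_atTop_iff_even_odd {P : ℕ → Prop} :
    (∀ᶠ m in atTop, P m) ↔ (∀ᶠ n in atTop, P (2 * n)) ∧ ∀ᶠ n in atTop, P (2 * n + 1) := by
  refine ⟨fun h => ⟨?_, ?_⟩, fun ⟨h₀, h₁⟩ => ?_⟩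
  · exact (tendsto_atTop_atTop.mpr fun N => ⟨N, fun n hn => by omega⟩).eventually h
  · exact (tendsto_atTop_atTop.mpr fun N => ⟨N, fun n hn => by omega⟩).eventually h
  obtain ⟨N₀, hN₀⟩ := eventually_atTop.mp h₀
  obtain ⟨N₁, hN₁⟩ := eventually_atTop.mp h₁
  refine eventually_atTop.mpr ⟨2 * (N₀ + N₁), fun m hm => ?_⟩
  obtain ⟨n, rfl | rfl⟩ := Nat.even_or_odd' m
  · exact hN₀ n (by omega)
  · exact hN₁ n (by omega)

theorem IOE_subset_IOE {u v : ℕ → ℕ} (huv : ∀ n, u n ≤ v n) : IOE v ⊆ IOE u :=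
  fun _ hf x hx hxu => hf x hx fun n => (hxu n).trans_le (huv n)

theorem AED_subset_AED {u v : ℕ → ℕ} (huv : ∀ n, u n ≤ v n) : AED u ⊆ AED v :=
  fun _ hf => ⟨fun n => (hf.1 n).trans_le (huv n), hf.2⟩

theorem even_mem_IOE_or_odd_mem_IOE {u f : ℕ → ℕ} (hf : f ∈ IOE u) :
    (fun n => f (2 * n)) ∈ IOE (fun n => u (2 * n)) ∨
      (fun n => f (2 * n + 1)) ∈ IOE (fun n => u (2 * n + 1)) := by
  by_contra! ⟨h₀, h₁⟩
  simp only [IOE, Set.mem_ofPred_eq, not_forall, not_frequently] at h₀ h₁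
  obtain ⟨x₀, hx₀, hx₀u, hfx₀⟩ := h₀
  obtain ⟨x₁, hx₁, hx₁u, hfx₁⟩ := h₁
  have hf_avoids : ∀ᶠ m in atTop, f m ≠ interleave x₀ x₁ m :=
    eventually_atTop_iff_even_odd.mpr (by simpa using And.intro hfx₀ hfx₁)
  exact not_frequently.mpr hf_avoids
    (hf _ (computable_interleave hx₀ hx₁) (forall_interleave_lt hx₀u hx₁u))

theorem interleave_mem_AED {u a b : ℕ → ℕ} (ha : a ∈ AED fun n => u (2 * n))
    (hb : b ∈ AED fun n => u (2 * n + 1)) : interleave a b ∈ AED u := by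
  refine ⟨forall_interleave_lt ha.1 hb.1, fun x hx => ?_⟩
  have hx₀ := ha.2 _ (hx.comp Primrec.nat_double.to_comp)
  have hx₁ := hb.2 _ (hx.comp Primrec.nat_double_succ.to_comp)
  exact eventually_atTop_iff_even_odd.mpr (by simpa using And.intro hx₀ hx₁)

theorem stmt7_general (h : ℕ → ℕ) (hm : Monotone h) :
    MuchnikEquiv (IOE h) (IOE fun n => h (2 * n)) ∧
      MedvedevEquiv (AED h) (AED fun n => h (2 * n)) := by
  have h_le_even : ∀ n, h n ≤ h (2 * n) := fun n => hm (by omega)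
  have h_even_le_odd : ∀ n, h (2 * n) ≤ h (2 * n + 1) := fun n => hm (by omega)
  refine ⟨⟨(medvedevLE_of_subset (IOE_subset_IOE h_le_even)).muchnikLE, fun f hf => ?_⟩,
    medvedevLE_of_comp (p := (· / 2)) (Primrec.nat_div.comp .id (.const 2)).to_comp
      fun f hf => ?_,
    medvedevLE_of_subset (AED_subset_AED h_le_even)⟩
  · rcases even_mem_IOE_or_odd_mem_IOE hf with heven | hodd
    · exact ⟨_, heven, turingLE_comp Primrec.nat_double.to_comp f⟩
    · exact ⟨_, IOE_subset_IOE h_even_le_odd hodd,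
        turingLE_comp Primrec.nat_double_succ.to_comp f⟩
  · rw [← interleave_self]
    exact interleave_mem_AED hf (AED_subset_AED h_even_le_odd hf)

/-- For computable nondecreasing `h` and `g(n) = h(2n)`:
`IOE(h) ≡_W IOE(g)` and `AED(h) ≡_S AED(g)`. -/
theorem stmt7 (h : ℕ → ℕ) (hc : Computable h) (hm : Monotone h) :
    MuchnikEquiv (IOE h) (IOE fun n => h (2 * n)) ∧
      MedvedevEquiv (AED h) (AED fun n => h (2 * n)) :=
  stmt7_general h hm

end Paper
end

section
/- Let H: ℕ→ℕ, let σ be a string of length m with σ(i) < H(i) for all i < m, let n ∈ ℕ, and let T ⊆ ^{<ω}H be a finite tree that is H↾(m+2n)-full-branching above σ. Let C₁, C₂ be a partition of the set of all leaves of T (the strings of length m+2n in T extending σ). Then at least one of the following holds: (i) the tree consisting of the nodes of T compatible with some element of C₁ is H↾(m+n)-full-branching above σ; (ii) there exists a node τ ⪰ σ of length m+n such that the tree consisting of the nodes of T compatible with some element of C₂ is H↾(m+2n)-full-branching above τ. -/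
/-!
Either every branch through `σ` meets, at level `m + n`, a node compatible with a leaf in `C₁`,
or some node `τ ⪰ σ` of length `m + n` is compatible with no leaf in `C₁`; in the latter case
every leaf of `T` above `τ` lies in `C₂`.
-/

namespace Paper

/-- The restriction `f↾n` of a function `f : ℕ → ℕ`, as the string
`[f 0, …, f (n-1)]`. -/
def funRestrict (f : ℕ → ℕ) (n : ℕ) : List ℕ := (List.range n).map f

/-- A tree is a set of strings (finite sequences of naturals) closed under
prefixes. -/
def IsTree (T : Set (List ℕ)) : Prop := ∀ σ ∈ T, ∀ τ : List ℕ, τ <+: σ → τ ∈ T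

/-- `σ` belongs to the full tree `^{<ω}H`, i.e. `σ(i) < H(i)` for all
`i < |σ|`. -/
def InFullTree (H : ℕ → ℕ) (σ : List ℕ) : Prop :=
  ∀ i < σ.length, σ.getD i 0 < H i

/-- `T` is `H↾n`-full-branching above `σ`: for every `f` with `f(i) < H(i)` for
all `i` and `σ` a prefix of `f`, the restriction `f↾n` belongs to `T`. -/
def FullBranchingAbove (H : ℕ → ℕ) (T : Set (List ℕ)) (σ : List ℕ) (n : ℕ) : Prop :=
  ∀ f : ℕ → ℕ, (∀ i, f i < H i) → funRestrict f σ.length = σ → funRestrict f n ∈ T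

/-- Two strings are compatible if one is a prefix of the other. -/
def Compatible (σ τ : List ℕ) : Prop := σ <+: τ ∨ τ <+: σ

lemma funRestrict_length (f : ℕ → ℕ) (n : ℕ) : (funRestrict f n).length = n := by
  simp [funRestrict]

lemma funRestrict_take (f : ℕ → ℕ) {a b : ℕ} (h : a ≤ b) :
    (funRestrict f b).take a = funRestrict f a := by
  simp [funRestrict, ← List.map_take, List.take_range, Nat.min_eq_left h]

lemma funRestrict_prefix (f : ℕ → ℕ) {a b : ℕ} (h : a ≤ b) :
    funRestrict f a <+: funRestrict f b := by
  rw [← funRestrict_take f h]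
  exact List.take_prefix _ _

lemma funRestrict_eq_of_prefix {f : ℕ → ℕ} {σ τ : List ℕ} (hστ : σ <+: τ)
    (hf : funRestrict f τ.length = τ) : funRestrict f σ.length = σ := by
  rw [← funRestrict_take f hστ.length_le, hf]
  exact (List.prefix_iff_eq_take.mp hστ).symm

namespace FullBranchingAbove

variable {H : ℕ → ℕ} {T : Set (List ℕ)} {σ : List ℕ} {N : ℕ}

lemma of_prefix (h : FullBranchingAbove H T σ N) {τ : List ℕ} (hστ : σ <+: τ) :
    FullBranchingAbove H T τ N :=
  fun f hf hfτ => h f hf (funRestrict_eq_of_prefix hστ hfτ)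

lemma funRestrict_mem_leaves (h : FullBranchingAbove H T σ N) (hN : σ.length ≤ N)
    {f : ℕ → ℕ} (hf : ∀ i, f i < H i) (hfσ : funRestrict f σ.length = σ) :
    funRestrict f N ∈ {τ ∈ T | τ.length = N ∧ σ <+: τ} :=
  ⟨h f hf hfσ, funRestrict_length f N, hfσ ▸ funRestrict_prefix f hN⟩

lemma compatible_subtree (hT : IsTree T) (h : FullBranchingAbove H T σ N) {k : ℕ}
    (hk : k ≤ N) {C : Set (List ℕ)}
    (hC : ∀ f : ℕ → ℕ, (∀ i, f i < H i) → funRestrict f σ.length = σ →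
      ∃ ρ ∈ C, Compatible (funRestrict f k) ρ) :
    FullBranchingAbove H {τ ∈ T | ∃ ρ ∈ C, Compatible τ ρ} σ k :=
  fun f hf hfσ => ⟨hT _ (h f hf hfσ) _ (funRestrict_prefix f hk), hC f hf hfσ⟩

end FullBranchingAbove

theorem stmt19_general (H : ℕ → ℕ) (σ : List ℕ) (m : ℕ) (hσlen : σ.length = m)
    (n : ℕ) (T : Set (List ℕ)) (hT : IsTree T)
    (hfull : FullBranchingAbove H T σ (m + 2 * n))
    (C₁ C₂ : Set (List ℕ))
    (hpart : C₁ ∪ C₂ = {τ ∈ T | τ.length = m + 2 * n ∧ σ <+: τ}) :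
    FullBranchingAbove H {τ ∈ T | ∃ ρ ∈ C₁, Compatible τ ρ} σ (m + n) ∨
      ∃ τ : List ℕ, τ.length = m + n ∧ σ <+: τ ∧
        FullBranchingAbove H {ρ ∈ T | ∃ ρ' ∈ C₂, Compatible ρ ρ'} τ (m + 2 * n) := by
  subst hσlen
  by_cases hC₁ : ∀ f : ℕ → ℕ, (∀ i, f i < H i) → funRestrict f σ.length = σ →
      ∃ ρ ∈ C₁, Compatible (funRestrict f (σ.length + n)) ρ
  · exact Or.inl (hfull.compatible_subtree hT (by omega) hC₁)
  push Not at hC₁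
  obtain ⟨f, hf, hfσ, hτC₁⟩ := hC₁
  set τ := funRestrict f (σ.length + n)
  have hστ : σ <+: τ := hfσ ▸ funRestrict_prefix f (by omega)
  refine Or.inr ⟨τ, funRestrict_length f _, hστ,
    (hfull.of_prefix hστ).compatible_subtree hT le_rfl fun g hg hgτ => ?_⟩
  have hleaf : funRestrict g (σ.length + 2 * n) ∈ C₁ ∪ C₂ :=
    hpart ▸ hfull.funRestrict_mem_leaves (by omega) hg (funRestrict_eq_of_prefix hστ hgτ)
  have hτg : τ <+: funRestrict g (σ.length + 2 * n) :=
    hgτ ▸ funRestrict_prefix g (by rw [funRestrict_length]; omega)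
  exact ⟨_, hleaf.resolve_left fun h => hτC₁ _ h (Or.inl hτg), Or.inl (List.prefix_refl _)⟩

/-- Lemma 5.3 of the paper: given a finite tree `T ⊆ ^{<ω}H` which is
`H↾(m+2n)`-full-branching above a string `σ` of length `m`, and a partition
`C₁, C₂` of its leaves (the strings of length `m+2n` in `T` extending `σ`),
either the nodes compatible with `C₁` form a tree which is
`H↾(m+n)`-full-branching above `σ`, or there is `τ ⪰ σ` of length `m+n` such
that the nodes compatible with `C₂` form a tree which is
`H↾(m+2n)`-full-branching above `τ`. -/
theorem stmt19 (H : ℕ → ℕ) (σ : List ℕ) (m : ℕ) (hσlen : σ.length = m)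
    (hσ : InFullTree H σ) (n : ℕ) (T : Set (List ℕ)) (hT : IsTree T)
    (hTsub : ∀ τ ∈ T, InFullTree H τ) (hTfin : T.Finite)
    (hfull : FullBranchingAbove H T σ (m + 2 * n))
    (C₁ C₂ : Set (List ℕ))
    (hpart : C₁ ∪ C₂ = {τ ∈ T | τ.length = m + 2 * n ∧ σ <+: τ})
    (hdisj : C₁ ∩ C₂ = ∅) :
    FullBranchingAbove H {τ ∈ T | ∃ ρ ∈ C₁, Compatible τ ρ} σ (m + n) ∨
      ∃ τ : List ℕ, τ.length = m + n ∧ σ <+: τ ∧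
        FullBranchingAbove H {ρ ∈ T | ∃ ρ' ∈ C₂, Compatible ρ ρ'} τ (m + 2 * n) :=
  stmt19_general H σ m hσlen n T hT hfull C₁ C₂ hpart

end Paper
end
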